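/- Let (ℱ_{i,j})_{i,j≥0} be a two-parameter filtration satisfying the (F4) condition, fix i ≥ 1, and let (C_j)_{j≥0} be a sequence of random variables in L². Then 𝔼[(Σ_j 𝔼_{∞,j−1} C_j²)^{1/2}] ≥ 𝔼[(Σ_j 𝔼_{∞,j−1} (𝔼_{i−1,∞} C_j)²)^{1/2}], where 𝔼_{∞,−1} := 𝔼_{∞,0}. -/

import Mathlib

open MeasureTheory ENNReal

/-- The σ-algebra `ℱ_{i,∞} = ⋁_j ℱ_{i,j}`. -/
def rowSup {Ω : Type*} (𝓕 : ℕ → ℕ → MeasurableSpace Ω) (i : ℕ) : MeasurableSpace Ω :=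
  ⨆ j, 𝓕 i j

/-- The σ-algebra `ℱ_{∞,j} = ⋁_i ℱ_{i,j}`. -/
def colSup {Ω : Type*} (𝓕 : ℕ → ℕ → MeasurableSpace Ω) (j : ℕ) : MeasurableSpace Ω :=
  ⨆ i, 𝓕 i j

/-- A two-parameter filtration satisfying the (F4) condition:
`𝔼_{i,j} 𝔼_{k,l} = 𝔼_{min(i,k),min(j,l)} = 𝔼_{k,l} 𝔼_{i,j}` as operators on `L¹`. -/
structure IsF4Filtration {Ω : Type*} [m0 : MeasurableSpace Ω] (μ : Measure Ω)
    (𝓕 : ℕ → ℕ → MeasurableSpace Ω) : Prop where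
  le : ∀ i j, 𝓕 i j ≤ m0
  mono_left : ∀ i j, 𝓕 i j ≤ 𝓕 (i + 1) j
  mono_right : ∀ i j, 𝓕 i j ≤ 𝓕 i (j + 1)
  f4 : ∀ i j k l : ℕ, ∀ f : Ω → ℝ, Integrable f μ →
    μ[μ[f|𝓕 k l]|𝓕 i j] =ᵐ[μ] μ[f|𝓕 (min i k) (min j l)]

/-!
Write `𝒢 = ℱ_{i-1,∞}`, `ℋ_j = ℱ_{∞,j-1}` and `𝒦_j = ℱ_{i-1,j-1}`. Passing to the limit in (F4)
along rows and columns (Lévy's upward theorem) shows that `𝔼[·|𝒢]` and `𝔼[·|ℋ_j]` commute, with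
product `𝔼[·|𝒦_j]`. For `V = 𝔼[C|𝒢]` and `u = 𝔼[V²|𝒦]` this gives `𝔼[V²|ℋ] = u = 𝔼[C V|𝒦]`,
and the conditional Cauchy–Schwarz inequality applied inside `𝔼[·|𝒦] = 𝔼[𝔼[·|ℋ]|𝒦]` yields
`u ≤ √u · 𝔼[√𝔼[C²|ℋ] | 𝒦]`, that is `𝔼[V²|ℋ] ≤ (𝔼[√𝔼[C²|ℋ] | 𝒢])²`. Summing over finitely many
`j`, conditional Jensen for the Euclidean norm and `𝔼 ∘ 𝔼[·|𝒢] = 𝔼` finish the proof;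
monotone convergence removes the finiteness.
-/

open Filter

section Levy

variable {Ω : Type*} {m0 : MeasurableSpace Ω} {μ : Measure Ω}

lemma ae_eq_of_tendsto_eLpNorm_sub_of_eventually_ae_eq {u : ℕ → Ω → ℝ} {v w : Ω → ℝ}
    (hu : ∀ n, AEStronglyMeasurable (u n) μ) (hv : AEStronglyMeasurable v μ)
    (hlim : Tendsto (fun n => eLpNorm (u n - v) 1 μ) atTop (nhds 0))
    (hw : ∀ᶠ n in atTop, u n =ᵐ[μ] w) : v =ᵐ[μ] w := by
  obtain ⟨N, hN⟩ := eventually_atTop.1 hw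
  have hconst : Tendsto (fun n => eLpNorm (u n - v) 1 μ) atTop
      (nhds (eLpNorm (u N - v) 1 μ)) :=
    tendsto_atTop_of_eventually_const fun n hn =>
      eLpNorm_congr_ae (((hN n hn).trans (hN N le_rfl).symm).sub EventuallyEq.rfl)
  have hzero :=
    (eLpNorm_eq_zero_iff ((hu N).sub hv) one_ne_zero).1 (tendsto_nhds_unique hconst hlim)
  filter_upwards [hzero, hN N le_rfl] with ω hω hNω
  rw [← hNω]
  exact (sub_eq_zero.1 hω).symm

variable [IsFiniteMeasure μ] {ℱ : Filtration ℕ m0} {f g : Ω → ℝ}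

lemma condExp_iSup_ae_eq_of_eventually (h : ∀ᶠ n in atTop, μ[f|ℱ n] =ᵐ[μ] g) :
    μ[f|⨆ n, ℱ n] =ᵐ[μ] g :=
  ae_eq_of_tendsto_eLpNorm_sub_of_eventually_ae_eq
    (fun _ => integrable_condExp.aestronglyMeasurable) integrable_condExp.aestronglyMeasurable
    (tendsto_eLpNorm_condExp f) h

lemma condExp_condExp_iSup_ae_eq_of_eventually {m : MeasurableSpace Ω}
    (h : ∀ᶠ n in atTop, μ[μ[f|ℱ n]|m] =ᵐ[μ] g) : μ[μ[f|⨆ n, ℱ n]|m] =ᵐ[μ] g := by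
  refine ae_eq_of_tendsto_eLpNorm_sub_of_eventually_ae_eq
    (fun _ => integrable_condExp.aestronglyMeasurable) integrable_condExp.aestronglyMeasurable
    (tendsto_of_tendsto_of_tendsto_of_le_of_le tendsto_const_nhds
      (tendsto_eLpNorm_condExp (μ := μ) (ℱ := ℱ) f) (fun _ => bot_le) fun n => ?_) h
  calc eLpNorm (μ[μ[f|ℱ n]|m] - μ[μ[f|⨆ n, ℱ n]|m]) 1 μ
      = eLpNorm (μ[μ[f|ℱ n] - μ[f|⨆ n, ℱ n]|m]) 1 μ :=
        (eLpNorm_congr_ae (condExp_sub integrable_condExp integrable_condExp m)).symm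
    _ ≤ eLpNorm (μ[f|ℱ n] - μ[f|⨆ n, ℱ n]) 1 μ := eLpNorm_condExp_le_eLpNorm _ le_rfl

end Levy

namespace IsF4Filtration

variable {Ω : Type*} {m0 : MeasurableSpace Ω} {μ : Measure Ω} {𝓕 : ℕ → ℕ → MeasurableSpace Ω}

lemma transpose (hF4 : IsF4Filtration μ 𝓕) : IsF4Filtration μ fun i j => 𝓕 j i where
  le i j := hF4.le j i
  mono_left i j := hF4.mono_right j i
  mono_right i j := hF4.mono_left j i
  f4 i j k l f hf := hF4.f4 j i l k f hf

lemma rowSup_le (hF4 : IsF4Filtration μ 𝓕) (i : ℕ) : rowSup 𝓕 i ≤ m0 :=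
  iSup_le (hF4.le i)

lemma colSup_le (hF4 : IsF4Filtration μ 𝓕) (j : ℕ) : colSup 𝓕 j ≤ m0 :=
  iSup_le fun i => hF4.le i j

def row (hF4 : IsF4Filtration μ 𝓕) (i : ℕ) : Filtration ℕ m0 where
  seq j := 𝓕 i j
  mono' := monotone_nat_of_le_succ (hF4.mono_right i)
  le' := hF4.le i

variable [IsFiniteMeasure μ] {f : Ω → ℝ}

lemma condExp_condExp_rowSup (hF4 : IsF4Filtration μ 𝓕) (i k j : ℕ) (hf : Integrable f μ) :
    μ[μ[f|rowSup 𝓕 i]|𝓕 k j] =ᵐ[μ] μ[f|𝓕 (min k i) j] :=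
  condExp_condExp_iSup_ae_eq_of_eventually (ℱ := hF4.row i) <|
    eventually_atTop.2 ⟨j, fun l hl => by
      have h := hF4.f4 k j i l f hf
      rwa [min_eq_left hl] at h⟩

lemma condExp_colSup_condExp_rowSup (hF4 : IsF4Filtration μ 𝓕) (i j : ℕ)
    (hf : Integrable f μ) : μ[μ[f|rowSup 𝓕 i]|colSup 𝓕 j] =ᵐ[μ] μ[f|𝓕 i j] :=
  condExp_iSup_ae_eq_of_eventually (ℱ := hF4.transpose.row j) <|
    eventually_atTop.2 ⟨i, fun k hk => by
      have h := hF4.condExp_condExp_rowSup i k j hf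
      rwa [min_eq_right hk] at h⟩

lemma condExp_rowSup_condExp_colSup (hF4 : IsF4Filtration μ 𝓕) (i j : ℕ)
    (hf : Integrable f μ) : μ[μ[f|colSup 𝓕 j]|rowSup 𝓕 i] =ᵐ[μ] μ[f|𝓕 i j] :=
  hF4.transpose.condExp_colSup_condExp_rowSup j i hf

end IsF4Filtration

lemma concaveOn_sqrt_mul_sqrt :
    ConcaveOn ℝ (Set.Ici 0 ×ˢ Set.Ici 0) fun p : ℝ × ℝ => √p.1 * √p.2 := by
  refine ⟨(convex_Ici 0).prod (convex_Ici 0), ?_⟩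
  rintro ⟨x₁, y₁⟩ ⟨hx₁, hy₁⟩ ⟨x₂, y₂⟩ ⟨hx₂, hy₂⟩ a b ha hb -
  simp only [Set.mem_Ici] at hx₁ hy₁ hx₂ hy₂
  simp only [Prod.smul_mk, Prod.mk_add_mk, smul_eq_mul]
  obtain ⟨p, hp, rfl⟩ : ∃ p, 0 ≤ p ∧ p ^ 2 = x₁ := ⟨√x₁, Real.sqrt_nonneg _, Real.sq_sqrt hx₁⟩
  obtain ⟨q, hq, rfl⟩ : ∃ q, 0 ≤ q ∧ q ^ 2 = y₁ := ⟨√y₁, Real.sqrt_nonneg _, Real.sq_sqrt hy₁⟩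
  obtain ⟨r, hr, rfl⟩ : ∃ r, 0 ≤ r ∧ r ^ 2 = x₂ := ⟨√x₂, Real.sqrt_nonneg _, Real.sq_sqrt hx₂⟩
  obtain ⟨t, ht, rfl⟩ : ∃ t, 0 ≤ t ∧ t ^ 2 = y₂ := ⟨√y₂, Real.sqrt_nonneg _, Real.sq_sqrt hy₂⟩
  rw [Real.sqrt_sq hp, Real.sqrt_sq hq, Real.sqrt_sq hr, Real.sqrt_sq ht,
    ← Real.sqrt_mul (by positivity)]
  refine Real.le_sqrt_of_sq_le ?_
  -- the defect in this two-term Cauchy–Schwarz inequality is `a b (p t - r q)²`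
  nlinarith [mul_nonneg (mul_nonneg ha hb) (sq_nonneg (p * t - r * q))]

lemma le_sq_of_le_sqrt_mul {u b : ℝ} (hu : 0 ≤ u) (h : u ≤ √u * b) : u ≤ b ^ 2 := by
  have hsq := Real.sq_sqrt hu
  nlinarith [Real.sqrt_nonneg u, sq_nonneg (b - √u)]

lemma ENNReal.sum_ofReal_sq_rpow_half {ι : Type*} (s : Finset ι) (y : ι → ℝ) :
    (∑ j ∈ s, ENNReal.ofReal (y j ^ 2)) ^ (1 / 2 : ℝ) = ENNReal.ofReal √(∑ j ∈ s, y j ^ 2) := by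
  rw [← ENNReal.ofReal_sum_of_nonneg fun j _ => sq_nonneg (y j),
    ENNReal.ofReal_rpow_of_nonneg (Finset.sum_nonneg fun j _ => sq_nonneg (y j)) (by norm_num),
    Real.sqrt_eq_rpow]

lemma ENNReal.ofReal_sqrt_sq (x : ℝ) : ENNReal.ofReal (√x ^ 2) = ENNReal.ofReal x := by
  rw [Real.sq_sqrt', ENNReal.ofReal_max, ENNReal.ofReal_zero, max_zero]

lemma norm_toLp_eq_sqrt_sum_sq {ι : Type*} (s : Finset ι) (y : ι → ℝ) :
    ‖(WithLp.toLp 2 fun j : s => y j : EuclideanSpace ℝ s)‖ = √(∑ j ∈ s, y j ^ 2) := by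
  simp [EuclideanSpace.norm_eq, ← Finset.sum_coe_sort s]

section ConditionalInequalities

variable {Ω : Type*} {m0 : MeasurableSpace Ω} {μ : Measure Ω} {m : MeasurableSpace Ω}

lemma MeasureTheory.Integrable.memLp_two_sqrt {X : Ω → ℝ} (hX : Integrable X μ) :
    MemLp (fun ω => √(X ω)) 2 μ := by
  refine (memLp_two_iff_integrable_sq (by fun_prop)).2 ?_
  simpa only [Real.sq_sqrt'] using hX.pos_part

lemma condExp_mul_le_sqrt_mul_sqrt (hm : m ≤ m0) [SigmaFinite (μ.trim hm)] {f g : Ω → ℝ}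
    (hf : MemLp f 2 μ) (hg : MemLp g 2 μ) :
    μ[f * g|m] ≤ᵐ[μ] fun ω => √(μ[fun x => f x ^ 2|m] ω) * √(μ[fun x => g x ^ 2|m] ω) := by
  set F : Ω → ℝ × ℝ := fun ω => (f ω ^ 2, g ω ^ 2)
  have hF : Integrable F μ := hf.integrable_sq.prodMk hg.integrable_sq
  have hφF : (fun p : ℝ × ℝ => √p.1 * √p.2) ∘ F = fun ω => |f ω| * |g ω| := by
    ext ω
    simp [F, Real.sqrt_sq_eq_abs]
  have habs : Integrable (fun ω => |f ω| * |g ω|) μ := by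
    simpa [abs_mul] using (hf.integrable_mul hg).abs
  have hjensen := concaveOn_sqrt_mul_sqrt.condExp_map_le (f := F) hm
    ((by fun_prop : Continuous fun p : ℝ × ℝ => √p.1 * √p.2).upperSemicontinuous
      |>.upperSemicontinuousOn _)
    (ae_of_all _ fun ω => ⟨sq_nonneg (f ω), sq_nonneg (g ω)⟩)
    (isClosed_Ici.prod isClosed_Ici) hF (hφF ▸ habs)
  have hfst : (fun ω => (μ[F|m] ω).1) =ᵐ[μ] μ[fun x => f x ^ 2|m] :=
    (ContinuousLinearMap.fst ℝ ℝ ℝ).comp_condExp_comm hF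
  have hsnd : (fun ω => (μ[F|m] ω).2) =ᵐ[μ] μ[fun x => g x ^ 2|m] :=
    (ContinuousLinearMap.snd ℝ ℝ ℝ).comp_condExp_comm hF
  have hmono : μ[f * g|m] ≤ᵐ[μ] μ[(fun ω => |f ω| * |g ω|)|m] :=
    condExp_mono (hf.integrable_mul hg) habs
      (ae_of_all _ fun ω => by simpa [abs_mul] using le_abs_self (f ω * g ω))
  rw [hφF] at hjensen
  filter_upwards [hjensen, hfst, hsnd, hmono] with ω hω h₁ h₂ h₃
  rw [← h₁, ← h₂]
  exact h₃.trans hω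

section EuclideanNorm

variable {ι : Type*} (s : Finset ι) {a : ι → Ω → ℝ}

lemma integrable_sqrt_sum_sq (ha : ∀ j ∈ s, Integrable (a j) μ) :
    Integrable (fun ω => √(∑ j ∈ s, a j ω ^ 2)) μ := by
  have hF : Integrable (fun ω => (WithLp.toLp 2 fun j : s => a j ω : EuclideanSpace ℝ s)) μ :=
    Integrable.of_eval_piLp fun j => ha j j.2
  exact hF.norm.congr (ae_of_all _ fun ω => norm_toLp_eq_sqrt_sum_sq s fun j => a j ω)

lemma sqrt_sum_sq_condExp_le (ha : ∀ j ∈ s, Integrable (a j) μ) :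
    (fun ω => √(∑ j ∈ s, (μ[a j|m] ω) ^ 2)) ≤ᵐ[μ]
      μ[fun ω => √(∑ j ∈ s, a j ω ^ 2)|m] := by
  set F : Ω → EuclideanSpace ℝ s := fun ω => WithLp.toLp 2 fun j => a j ω
  have hF : Integrable F μ := Integrable.of_eval_piLp fun j => ha j j.2
  have hnormF : (‖F ·‖) = fun ω => √(∑ j ∈ s, a j ω ^ 2) :=
    funext fun ω => norm_toLp_eq_sqrt_sum_sq s fun j => a j ω
  have hcoord : ∀ j : s, (μ[F|m] · j) =ᵐ[μ] μ[a j|m] := fun j =>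
    (EuclideanSpace.proj j).comp_condExp_comm hF
  filter_upwards [norm_condExp_le (m := m) F, ae_all_iff.2 hcoord] with ω hω hcoord
  have hμF : μ[F|m] ω = WithLp.toLp 2 fun j : s => μ[a j|m] ω := by
    ext j
    exact hcoord j
  rw [hnormF, hμF] at hω
  exact (norm_toLp_eq_sqrt_sum_sq s fun j => μ[a j|m] ω).symm.trans_le hω

end EuclideanNorm

lemma lintegral_ofReal_condExp (hm : m ≤ m0) [SigmaFinite (μ.trim hm)]
    {f : Ω → ℝ} (hf : Integrable f μ) (hf0 : 0 ≤ᵐ[μ] f) :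
    ∫⁻ ω, ENNReal.ofReal (μ[f|m] ω) ∂μ = ∫⁻ ω, ENNReal.ofReal (f ω) ∂μ := by
  rw [← ofReal_integral_eq_lintegral_ofReal integrable_condExp (condExp_nonneg hf0),
    ← ofReal_integral_eq_lintegral_ofReal hf hf0, integral_condExp hm]

lemma lintegral_tsum_rpow_eq_iSup {f : ℕ → Ω → ℝ≥0∞} (hf : ∀ j, AEMeasurable (f j) μ)
    {p : ℝ} (hp : 0 < p) :
    ∫⁻ ω, (∑' j, f j ω) ^ p ∂μ = ⨆ N, ∫⁻ ω, (∑ j ∈ Finset.range N, f j ω) ^ p ∂μ := by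
  have hpt (ω : Ω) : (∑' j, f j ω) ^ p = ⨆ N, (∑ j ∈ Finset.range N, f j ω) ^ p := by
    rw [ENNReal.tsum_eq_iSup_nat]
    exact (ENNReal.orderIsoRpow p hp).map_iSup _
  rw [lintegral_congr hpt]
  exact lintegral_iSup' (fun N => (Finset.aemeasurable_fun_sum _ fun j _ => hf j).pow_const p)
    (ae_of_all _ fun ω N M hNM => ENNReal.rpow_le_rpow
      (Finset.sum_le_sum_of_subset (Finset.range_subset_range.2 hNM)) hp.le)

end ConditionalInequalities

section CommutingCondExp

variable {Ω : Type*} {m0 : MeasurableSpace Ω} {μ : Measure Ω} [IsFiniteMeasure μ]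
  {G H K : MeasurableSpace Ω}

lemma condExp_sq_condExp_le_sq_condExp_sqrt (hG : G ≤ m0) (hH : H ≤ m0) (hKG : K ≤ G)
    (hKH : K ≤ H) (hGH : ∀ f : Ω → ℝ, Integrable f μ → μ[μ[f|G]|H] =ᵐ[μ] μ[f|K])
    (hHG : ∀ f : Ω → ℝ, Integrable f μ → μ[μ[f|H]|G] =ᵐ[μ] μ[f|K])
    {C : Ω → ℝ} (hC : MemLp C 2 μ) :
    μ[fun ω => (μ[C|G] ω) ^ 2|H] ≤ᵐ[μ]
      fun ω => (μ[fun x => √(μ[fun y => C y ^ 2|H] x)|G] ω) ^ 2 := by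
  set V := μ[C|G]
  set A : Ω → ℝ := fun x => √(μ[fun y => C y ^ 2|H] x)
  set u := μ[fun ω => V ω ^ 2|K]
  have hV : MemLp V 2 μ := hC.condExp one_le_two
  have hA : MemLp A 2 μ := Integrable.memLp_two_sqrt integrable_condExp
  have hsqrt_u : MemLp (fun ω => √(u ω)) 2 μ := Integrable.memLp_two_sqrt integrable_condExp
  have hVm : StronglyMeasurable[G] V := stronglyMeasurable_condExp
  have hAm : StronglyMeasurable[H] A :=
    Real.continuous_sqrt.comp_stronglyMeasurable stronglyMeasurable_condExp
  have hV2 : μ[fun ω => V ω ^ 2|H] =ᵐ[μ] u := by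
    have hV2m : StronglyMeasurable[G] fun ω => V ω ^ 2 := hVm.pow 2
    have h := hGH _ hV.integrable_sq
    rwa [condExp_of_stronglyMeasurable hG hV2m hV.integrable_sq] at h
  have hAK : μ[A|G] =ᵐ[μ] μ[A|K] := by
    have h := hHG _ (hA.integrable one_le_two)
    rwa [condExp_of_stronglyMeasurable hH hAm (hA.integrable one_le_two)] at h
  have hCV : μ[C * V|K] =ᵐ[μ] u := by
    have hpull : μ[C * V|G] =ᵐ[μ] fun ω => V ω ^ 2 := by
      rw [mul_comm]
      filter_upwards [condExp_mul_of_stronglyMeasurable_left hVm (hV.integrable_mul hC)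
        (hC.integrable one_le_two)] with ω hω
      rw [hω, Pi.mul_apply, sq]
    exact (condExp_condExp_of_le hKG hG).symm.trans (condExp_congr_ae hpull)
  have hCS : μ[C * V|H] ≤ᵐ[μ] (fun ω => √(u ω)) * A := by
    filter_upwards [condExp_mul_le_sqrt_mul_sqrt hH hC hV, hV2] with ω hω hVω
    rw [Pi.mul_apply, ← hVω]
    exact hω.trans_eq (mul_comm _ _)
  have hu_le : u ≤ᵐ[μ] fun ω => √(u ω) * μ[A|K] ω := by
    calc u =ᵐ[μ] μ[μ[C * V|H]|K] := hCV.symm.trans (condExp_condExp_of_le hKH hH).symm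
      _ ≤ᵐ[μ] μ[(fun ω => √(u ω)) * A|K] :=
        condExp_mono integrable_condExp (hsqrt_u.integrable_mul hA) hCS
      _ =ᵐ[μ] (fun ω => √(u ω)) * μ[A|K] := condExp_mul_of_stronglyMeasurable_left
        (Real.continuous_sqrt.comp_stronglyMeasurable stronglyMeasurable_condExp)
        (hsqrt_u.integrable_mul hA) (hA.integrable one_le_two)
  have hu0 : 0 ≤ᵐ[μ] u := condExp_nonneg (ae_of_all _ fun ω => sq_nonneg (V ω))
  filter_upwards [hV2, hAK, hu_le, hu0] with ω h₁ h₂ h₃ h₄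
  rw [h₁, h₂]
  exact le_sq_of_le_sqrt_mul h₄ h₃

lemma lintegral_sum_rpow_half_le_of_le_sq_condExp (hG : G ≤ m0) {ι : Type*} (s : Finset ι)
    {W X : ι → Ω → ℝ} (hX : ∀ j ∈ s, Integrable (X j) μ)
    (hW : ∀ j ∈ s, W j ≤ᵐ[μ] fun ω => (μ[fun x => √(X j x)|G] ω) ^ 2) :
    ∫⁻ ω, (∑ j ∈ s, ENNReal.ofReal (W j ω)) ^ (1 / 2 : ℝ) ∂μ ≤
      ∫⁻ ω, (∑ j ∈ s, ENNReal.ofReal (X j ω)) ^ (1 / 2 : ℝ) ∂μ := by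
  have hA : ∀ j ∈ s, Integrable (fun x => √(X j x)) μ := fun j hj =>
    (hX j hj).memLp_two_sqrt.integrable one_le_two
  calc _ ≤ ∫⁻ ω, ENNReal.ofReal √(∑ j ∈ s, (μ[fun x => √(X j x)|G] ω) ^ 2) ∂μ := by
        refine lintegral_mono_ae ?_
        filter_upwards [(eventually_all_finset s).2 hW] with ω hω
        rw [← ENNReal.sum_ofReal_sq_rpow_half]
        gcongr with j hj
        exact hω j hj
    _ ≤ ∫⁻ ω, ENNReal.ofReal (μ[fun ω => √(∑ j ∈ s, √(X j ω) ^ 2)|G] ω) ∂μ :=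
        lintegral_mono_ae <| (sqrt_sum_sq_condExp_le s hA).mono fun ω hω =>
          ENNReal.ofReal_le_ofReal hω
    _ = ∫⁻ ω, ENNReal.ofReal √(∑ j ∈ s, √(X j ω) ^ 2) ∂μ :=
        lintegral_ofReal_condExp hG (integrable_sqrt_sum_sq s hA)
          (ae_of_all _ fun ω => Real.sqrt_nonneg _)
    _ = _ := by simp_rw [← ENNReal.sum_ofReal_sq_rpow_half, ENNReal.ofReal_sqrt_sq]

end CommutingCondExp

lemma IsF4Filtration.condExp_sq_condExp_rowSup_le {Ω : Type*} {m0 : MeasurableSpace Ω}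
    {μ : Measure Ω} [IsFiniteMeasure μ] {𝓕 : ℕ → ℕ → MeasurableSpace Ω}
    (hF4 : IsF4Filtration μ 𝓕) (i j : ℕ) {C : Ω → ℝ} (hC : MemLp C 2 μ) :
    μ[fun ω => (μ[C|rowSup 𝓕 i] ω) ^ 2|colSup 𝓕 j] ≤ᵐ[μ]
      fun ω => (μ[fun x => √(μ[fun y => C y ^ 2|colSup 𝓕 j] x)|rowSup 𝓕 i] ω) ^ 2 :=
  condExp_sq_condExp_le_sq_condExp_sqrt (hF4.rowSup_le i) (hF4.colSup_le j)
    (le_iSup (fun l => 𝓕 i l) j) (le_iSup (fun k => 𝓕 k j) i)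
    (fun _ => hF4.condExp_colSup_condExp_rowSup i j)
    (fun _ => hF4.condExp_rowSup_condExp_colSup i j) hC

theorem conditional_square_function_contraction_general {Ω : Type*} [m0 : MeasurableSpace Ω]
    (μ : Measure Ω) [IsProbabilityMeasure μ] (𝓕 : ℕ → ℕ → MeasurableSpace Ω)
    (hF4 : IsF4Filtration μ 𝓕) (i : ℕ)
    (C : ℕ → Ω → ℝ) (hC : ∀ j, MemLp (C j) 2 μ) :
    ∫⁻ ω, (∑' j : ℕ, ENNReal.ofReal
        ((μ[fun a => ((μ[C j|rowSup 𝓕 (i - 1)]) a) ^ 2|colSup 𝓕 (j - 1)]) ω))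
          ^ (1/2 : ℝ) ∂μ ≤
      ∫⁻ ω, (∑' j : ℕ, ENNReal.ofReal
        ((μ[fun a => C j a ^ 2|colSup 𝓕 (j - 1)]) ω)) ^ (1/2 : ℝ) ∂μ := by
  rw [lintegral_tsum_rpow_eq_iSup (fun j => integrable_condExp.aemeasurable.ennreal_ofReal)
    (by norm_num)]
  refine iSup_le fun N => ?_
  calc _ ≤ ∫⁻ ω, (∑ j ∈ Finset.range N,
          ENNReal.ofReal ((μ[fun a => C j a ^ 2|colSup 𝓕 (j - 1)]) ω)) ^ (1 / 2 : ℝ) ∂μ :=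
        lintegral_sum_rpow_half_le_of_le_sq_condExp (hF4.rowSup_le (i - 1)) _
          (fun j _ => integrable_condExp)
          fun j _ => hF4.condExp_sq_condExp_rowSup_le (i - 1) (j - 1) (hC j)
    _ ≤ _ := lintegral_mono fun ω => ENNReal.rpow_le_rpow (ENNReal.sum_le_tsum _) (by norm_num)

/-- For an (F4) two-parameter filtration, `i ≥ 1` and a sequence
`(C_j) ⊆ L²`, one has
`𝔼[(Σ_j 𝔼_{∞,j−1} C_j²)^{1/2}] ≥ 𝔼[(Σ_j 𝔼_{∞,j−1} (𝔼_{i−1,∞} C_j)²)^{1/2}]`. -/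
theorem conditional_square_function_contraction {Ω : Type*} [m0 : MeasurableSpace Ω]
    (μ : Measure Ω) [IsProbabilityMeasure μ] (𝓕 : ℕ → ℕ → MeasurableSpace Ω)
    (hF4 : IsF4Filtration μ 𝓕) (i : ℕ) (hi : 1 ≤ i)
    (C : ℕ → Ω → ℝ) (hC : ∀ j, MemLp (C j) 2 μ) :
    ∫⁻ ω, (∑' j : ℕ, ENNReal.ofReal
        ((μ[fun a => ((μ[C j|rowSup 𝓕 (i - 1)]) a) ^ 2|colSup 𝓕 (j - 1)]) ω))
          ^ (1/2 : ℝ) ∂μ ≤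
      ∫⁻ ω, (∑' j : ℕ, ENNReal.ofReal
        ((μ[fun a => C j a ^ 2|colSup 𝓕 (j - 1)]) ω)) ^ (1/2 : ℝ) ∂μ :=
  conditional_square_function_contraction_general (m0 := m0) μ 𝓕 hF4 i C hC
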